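/- arXiv:0907.0558 — 2 statements merged into one kernel-verified Lean document; each statement's English description precedes it below -/
import Mathlib

section
/- There exists a constant C > 0 such that w(z)·w(z + ξ) ≤ C·w(ξ) for all z, ξ ∈ ℝ^N. -/
/-!
Write `W r = g r · (1 + r)^(-α) e^(-r)` with `α = (N - 1)/2`. The asymptotics make `g` tend to
`A > 0`, so `g`, being continuous and positive on `[0, ∞)`, is pinched between two positive
constants. The profile `(1 + r)^(-α) e^(-r)` is supermultiplicative along the triangle
inequality: for `c ≤ a + b` one has `1 + c ≤ (1 + a)(1 + b)` and `e^(-a) e^(-b) ≤ e^(-c)`.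
Apply this with `a = |z|`, `b = |z + ξ|`, `c = |ξ|`.
-/

open Filter Set Real

noncomputable def expDecayProfile (α r : ℝ) : ℝ := (1 + r) ^ (-α) * exp (-r)

lemma expDecayProfile_pos (α : ℝ) {r : ℝ} (hr : 0 ≤ r) : 0 < expDecayProfile α r := by
  unfold expDecayProfile; positivity

lemma expDecayProfile_mul_le {α a b c : ℝ} (hα : 0 ≤ α) (ha : 0 ≤ a) (hb : 0 ≤ b) (hc : 0 ≤ c)
    (hcab : c ≤ a + b) :
    expDecayProfile α a * expDecayProfile α b ≤ expDecayProfile α c := by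
  have hpow : (1 + a) ^ (-α) * (1 + b) ^ (-α) ≤ (1 + c) ^ (-α) := by
    rw [← mul_rpow (by linarith) (by linarith)]
    exact rpow_le_rpow_of_nonpos (by linarith) (by nlinarith) (by linarith)
  have hexp : exp (-a) * exp (-b) ≤ exp (-c) := by
    rw [← exp_add]; exact exp_le_exp.2 (by linarith)
  calc expDecayProfile α a * expDecayProfile α b
      = ((1 + a) ^ (-α) * (1 + b) ^ (-α)) * (exp (-a) * exp (-b)) := by
        unfold expDecayProfile; ring
    _ ≤ (1 + c) ^ (-α) * exp (-c) := by gcongr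

lemma ContinuousOn.bddAbove_image_Ici_of_tendsto {g : ℝ → ℝ} {a A : ℝ}
    (hg : ContinuousOn g (Ici a)) (hlim : Tendsto g atTop (nhds A)) : BddAbove (g '' Ici a) := by
  obtain ⟨R, hR⟩ := eventually_atTop.1 (hlim.eventually (eventually_le_nhds (lt_add_one A)))
  have hsplit : Ici a ⊆ Icc a R ∪ Ici R := fun r hr => by
    rcases le_total r R with h | h
    exacts [Or.inl ⟨hr, h⟩, Or.inr h]
  refine BddAbove.mono ((image_mono hsplit).trans (image_union _ _ _).le) ?_
  exact (isCompact_Icc.bddAbove_image (hg.mono Icc_subset_Ici_self)).union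
    ⟨A + 1, forall_mem_image.2 hR⟩

lemma ContinuousOn.exists_pos_bounds_of_tendsto {g : ℝ → ℝ} {a A : ℝ}
    (hg : ContinuousOn g (Ici a)) (hpos : ∀ r ∈ Ici a, 0 < g r) (hA : 0 < A)
    (hlim : Tendsto g atTop (nhds A)) :
    ∃ m > 0, ∃ M > 0, ∀ r ∈ Ici a, m ≤ g r ∧ g r ≤ M := by
  obtain ⟨M, hM⟩ := hg.bddAbove_image_Ici_of_tendsto hlim
  obtain ⟨M', hM'⟩ := (hg.inv₀ fun r hr => (hpos r hr).ne').bddAbove_image_Ici_of_tendsto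
    (hlim.inv₀ hA.ne')
  have hga := hpos a self_mem_Ici
  have hM'pos : 0 < M' := (inv_pos.2 hga).trans_le (hM' (mem_image_of_mem _ self_mem_Ici))
  refine ⟨M'⁻¹, inv_pos.2 hM'pos, M, hga.trans_le (hM (mem_image_of_mem _ self_mem_Ici)),
    fun r hr => ⟨?_, hM (mem_image_of_mem _ hr)⟩⟩
  exact inv_le_of_inv_le₀ (hpos r hr) (hM' (mem_image_of_mem _ hr))

lemma tendsto_one_add_rpow_mul_exp_mul {W : ℝ → ℝ} {α A : ℝ}
    (hW_asym : Tendsto (fun r => r ^ α * exp r * W r) atTop (nhds A)) :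
    Tendsto (fun r => (1 + r) ^ α * exp r * W r) atTop (nhds A) := by
  have hratio : Tendsto (fun r : ℝ => r⁻¹ + 1) atTop (nhds 1) := by
    simpa using tendsto_inv_atTop_zero.add_const (1 : ℝ)
  have := (hratio.rpow_const (Or.inl one_ne_zero) (p := α)).mul hW_asym
  rw [one_rpow, one_mul] at this
  refine this.congr' ((eventually_gt_atTop 0).mono fun r hr => ?_)
  dsimp only
  rw [← mul_assoc, ← mul_assoc, ← mul_rpow (by positivity) hr.le, add_mul,
    inv_mul_cancel₀ hr.ne', one_mul]

lemma exists_expDecayProfile_bounds {W : ℝ → ℝ} {α A : ℝ}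
    (hW_cont : ContinuousOn W (Ici 0)) (hW_pos : ∀ r ∈ Ici (0 : ℝ), 0 < W r) (hA : 0 < A)
    (hW_asym : Tendsto (fun r => r ^ α * exp r * W r) atTop (nhds A)) :
    ∃ m > 0, ∃ M > 0, ∀ r ∈ Ici (0 : ℝ),
      m * expDecayProfile α r ≤ W r ∧ W r ≤ M * expDecayProfile α r := by
  have hcont : ContinuousOn (fun r => (1 + r) ^ α * exp r * W r) (Ici 0) := by
    refine ContinuousOn.mul (fun r hr => ?_) hW_cont
    exact ((continuousAt_const.add continuousAt_id).rpow_const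
      (Or.inl (by rw [mem_Ici] at hr; dsimp; positivity))).mul
      continuous_exp.continuousAt |>.continuousWithinAt
  obtain ⟨m, hm, M, hM, hbounds⟩ := hcont.exists_pos_bounds_of_tendsto
    (fun r hr => by have := hW_pos r hr; simp only [mem_Ici] at hr; positivity) hA
    (tendsto_one_add_rpow_mul_exp_mul hW_asym)
  refine ⟨m, hm, M, hM, fun r hr => ?_⟩
  have hW : W r = ((1 + r) ^ α * exp r * W r) * expDecayProfile α r := by
    simp only [mem_Ici] at hr
    rw [expDecayProfile, rpow_neg (by positivity), exp_neg]
    field_simp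
  have hprof := expDecayProfile_pos α hr
  obtain ⟨hlow, hhigh⟩ := hbounds r hr
  constructor <;> rw [hW] <;> gcongr

theorem bump_product_bound
    (N : ℕ) (hN : 2 ≤ N)
    (W : ℝ → ℝ) (hW_cont : ContinuousOn W (Ici 0))
    (hW_pos : ∀ r ∈ Ici (0 : ℝ), 0 < W r)
    (A : ℝ) (hA : 0 < A)
    (hW_asym : Tendsto (fun r => r ^ (((N : ℝ) - 1) / 2) * Real.exp r * W r)
      atTop (nhds A))
    (w : EuclideanSpace ℝ (Fin N) → ℝ) (hw : ∀ x, w x = W ‖x‖) :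
    ∃ C > (0 : ℝ), ∀ z ξ : EuclideanSpace ℝ (Fin N),
      w z * w (z + ξ) ≤ C * w ξ := by
  have hα : 0 ≤ ((N : ℝ) - 1) / 2 := by
    have : (2 : ℝ) ≤ N := by exact_mod_cast hN
    linarith
  obtain ⟨m, hm, M, hM, hbounds⟩ := exists_expDecayProfile_bounds hW_cont hW_pos hA hW_asym
  refine ⟨M ^ 2 / m, by positivity, fun z ξ => ?_⟩
  have hz : ‖z‖ ∈ Ici (0 : ℝ) := norm_nonneg z
  have hzξ : ‖z + ξ‖ ∈ Ici (0 : ℝ) := norm_nonneg (z + ξ)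
  have hξ : ‖ξ‖ ∈ Ici (0 : ℝ) := norm_nonneg ξ
  have htri : ‖ξ‖ ≤ ‖z‖ + ‖z + ξ‖ := by
    have := norm_sub_le (z + ξ) z
    rw [add_sub_cancel_left] at this
    linarith
  rw [hw, hw, hw]
  calc W ‖z‖ * W ‖z + ξ‖
      ≤ (M * expDecayProfile _ ‖z‖) * (M * expDecayProfile _ ‖z + ξ‖) :=
        mul_le_mul (hbounds _ hz).2 (hbounds _ hzξ).2 (hW_pos _ hzξ).le
          (mul_pos hM (expDecayProfile_pos _ hz)).le
    _ = M ^ 2 * (expDecayProfile _ ‖z‖ * expDecayProfile _ ‖z + ξ‖) := by ring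
    _ ≤ M ^ 2 * expDecayProfile _ ‖ξ‖ := by
        gcongr; exact expDecayProfile_mul_le hα hz hzξ hξ htri
    _ ≤ M ^ 2 * (W ‖ξ‖ / m) := by
        gcongr; exact (le_div_iff₀' hm).2 (hbounds _ hξ).1
    _ = M ^ 2 / m * W ‖ξ‖ := by ring
end

section
/- The function ξ(ρ) := ∫_{ℝ^N} f(w(x))·w(x + ρe₁) dx is differentiable on (0, ∞) with ξ'(ρ) = ∫_{ℝ^N} f(w(x))·W'(|x + ρe₁|)·(x₁ + ρ)/|x + ρe₁| dx, and ξ'(ρ)/W'(ρ) → ∫_{ℝ^N} f(w(x))·e^{−x₁} dx as ρ → +∞. -/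
/-!
The asymptotics of `W` give `W r ≲ e^{-r}`, hence `|f (w x)| ≲ e^{-(1+σ)|x|}` is integrable.
Since `N ≥ 2`, almost every line `x + τ e₁` misses the origin, so `τ ↦ W ‖x + τ e₁‖` is
differentiable for a.e. `x`, and boundedness of `W` and `W'` allows differentiating under the
integral sign.

For the limit, `‖x + ρ e₁‖ - ρ → x₁`, so the asymptotics of `W'` give
`W' ‖x + ρ e₁‖ / W' ρ → e^{-x₁}` pointwise. Dominated convergence applies because
`|W' ‖x + ρ e₁‖| ≲ e^{(1+σ/2)|x|} |W' ρ|` for large `ρ`: where `‖x + ρ e₁‖ ≥ ρ/2` this follows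
from the asymptotics of `W'` at both points, and elsewhere `|x| ≥ ρ/2`, so the polynomial factor
`ρ^{(N-1)/2}` lost by the crude bound `|W' r| ≲ e^{-r}` is absorbed by `e^{σ|x|/2}`.
-/

open Filter Set Real MeasureTheory Module Topology
open scoped RealInnerProductSpace

section Geometry

variable {E : Type*} [NormedAddCommGroup E] [InnerProductSpace ℝ E]

theorem hasDerivAt_norm_add_smul {x v : E} {τ : ℝ} (h : x + τ • v ≠ 0) :
    HasDerivAt (fun s : ℝ => ‖x + s • v‖) (⟪x + τ • v, v⟫ / ‖x + τ • v‖) τ := by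
  have hline : HasDerivAt (fun s : ℝ => x + s • v) v τ := by
    simpa using ((hasDerivAt_id τ).smul_const v).const_add x
  have hsq := hline.norm_sq.sqrt (pow_ne_zero 2 (norm_ne_zero_iff.mpr h))
  simp only [Real.sqrt_sq (norm_nonneg _)] at hsq
  convert hsq using 1
  ring

theorem inner_add_smul_of_norm_eq_one {x e : E} (he : ‖e‖ = 1) (τ : ℝ) :
    ⟪x + τ • e, e⟫ = ⟪x, e⟫ + τ := by
  rw [inner_add_left, real_inner_smul_left, real_inner_self_eq_norm_sq, he, one_pow, mul_one]

theorem abs_div_norm_add_smul_le_one {x e : E} (he : ‖e‖ = 1) (τ : ℝ) :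
    |(⟪x, e⟫ + τ) / ‖x + τ • e‖| ≤ 1 := by
  have h := abs_real_inner_le_norm (x + τ • e) e
  rw [he, mul_one, inner_add_smul_of_norm_eq_one he] at h
  rw [abs_div, abs_norm]
  exact div_le_one_of_le₀ h (norm_nonneg _)

theorem sub_norm_le_norm_add_smul {x e : E} (he : ‖e‖ = 1) (τ : ℝ) :
    τ - ‖x‖ ≤ ‖x + τ • e‖ := by
  have h := norm_sub_norm_le (τ • e) (-x)
  rw [norm_neg, sub_neg_eq_add, add_comm, norm_smul, he, mul_one, Real.norm_eq_abs] at h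
  linarith [le_abs_self τ]

theorem tendsto_norm_add_smul_sub {e : E} (he : ‖e‖ = 1) (x : E) :
    Tendsto (fun ρ : ℝ => ‖x + ρ • e‖ - ρ) atTop (𝓝 ⟪x, e⟫) := by
  have hd : HasDerivAt (fun t : ℝ => ‖e + t • x‖) ⟪x, e⟫ 0 := by
    have := hasDerivAt_norm_add_smul (x := e) (v := x) (τ := 0)
      (by simp [← norm_ne_zero_iff, he])
    simpa [he, real_inner_comm] using this
  -- `‖x + ρ • e‖ - ρ` is the difference quotient of `t ↦ ‖e + t • x‖` at `0` with step `ρ⁻¹`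
  refine (hd.tendsto_slope_zero_right.comp tendsto_inv_atTop_nhdsGT_zero).congr' ?_
  filter_upwards [eventually_gt_atTop 0] with ρ hρ
  have : ‖x + ρ • e‖ = ρ * ‖e + ρ⁻¹ • x‖ := by
    rw [← norm_smul_of_nonneg hρ.le, smul_add, smul_inv_smul₀ hρ.ne', add_comm]
  simp [this, he, mul_sub]

theorem tendsto_inner_add_div_norm_add_smul {e : E} (he : ‖e‖ = 1) (x : E) :
    Tendsto (fun ρ : ℝ => (⟪x, e⟫ + ρ) / ‖x + ρ • e‖) atTop (𝓝 1) := by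
  have hsub := tendsto_norm_add_smul_sub he x
  have hnorm : Tendsto (fun ρ : ℝ => ‖x + ρ • e‖) atTop atTop :=
    (hsub.add_atTop tendsto_id).congr fun ρ => sub_add_cancel _ _
  have h := (((tendsto_const_nhds (x := ⟪x, e⟫)).sub hsub).div_atTop hnorm).const_add 1
  rw [add_zero] at h
  refine h.congr' ?_
  filter_upwards [hnorm.eventually_gt_atTop 0] with ρ hρ
  field_simp
  ring

theorem abs_mul_comp_norm_add_smul_mul_div_le {e : E} (he : ‖e‖ = 1) (x : E) {a C₁ σ M : ℝ}
    {g : ℝ → ℝ} {ρ : ℝ} (ha : |a| ≤ C₁ * exp (-((1 + σ) * ‖x‖))) (hC₁ : 0 ≤ C₁) (hM : 0 ≤ M)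
    (hρ : ∀ r > 0, ∀ t ≥ 0, ρ - t ≤ r → |g r| ≤ M * exp ((1 + σ / 2) * t) * |g ρ|) :
    |a * g ‖x + ρ • e‖ * ((⟪x, e⟫ + ρ) / ‖x + ρ • e‖) / g ρ| ≤
      C₁ * M * exp (-(σ / 2 * ‖x‖)) := by
  rw [abs_div, abs_mul, abs_mul]
  refine div_le_of_le_mul₀ (abs_nonneg _) (by positivity) ?_
  rcases (norm_nonneg (x + ρ • e)).eq_or_lt with hr | hr
  · rw [← hr, div_zero, abs_zero, mul_zero]
    positivity
  have hexp : exp (-((1 + σ) * ‖x‖)) * exp ((1 + σ / 2) * ‖x‖) = exp (-(σ / 2 * ‖x‖)) := by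
    rw [← exp_add]
    ring_nf
  calc |a| * |g ‖x + ρ • e‖| * |(⟪x, e⟫ + ρ) / ‖x + ρ • e‖|
      ≤ |a| * |g ‖x + ρ • e‖| :=
        mul_le_of_le_one_right (by positivity) (abs_div_norm_add_smul_le_one he ρ)
    _ ≤ C₁ * exp (-((1 + σ) * ‖x‖)) * (M * exp ((1 + σ / 2) * ‖x‖) * |g ρ|) :=
        mul_le_mul ha (hρ _ hr _ (norm_nonneg x) (sub_norm_le_norm_add_smul he ρ))
          (abs_nonneg _) (by positivity)
    _ = C₁ * M * exp (-(σ / 2 * ‖x‖)) * |g ρ| := by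
        linear_combination C₁ * M * |g ρ| * hexp

end Geometry

section HaarMeasure

variable {E : Type*} [NormedAddCommGroup E] [InnerProductSpace ℝ E] [FiniteDimensional ℝ E]
  [MeasurableSpace E] [BorelSpace E] (μ : Measure E) [μ.IsAddHaarMeasure]

theorem ae_forall_add_smul_ne_zero (hE : 1 < finrank ℝ E) (v : E) :
    ∀ᵐ x ∂μ, ∀ τ : ℝ, x + τ • v ≠ 0 := by
  have hline : (ℝ ∙ v) ≠ ⊤ := by
    intro h
    have h1 := finrank_span_le_card (R := ℝ) ({v} : Set E)
    rw [h, finrank_top] at h1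
    simp only [Set.toFinset_singleton, Finset.card_singleton] at h1
    omega
  filter_upwards [measure_eq_zero_iff_ae_notMem.mp (Measure.addHaar_submodule μ _ hline)]
    with x hx τ hzero
  refine hx ?_
  rw [eq_neg_of_add_eq_zero_left hzero, ← neg_smul]
  exact Submodule.smul_mem _ _ (Submodule.mem_span_singleton_self v)

theorem integrable_exp_neg_mul_norm [Nontrivial E] {c : ℝ} (hc : 0 < c) :
    Integrable (fun x : E => exp (-(c * ‖x‖))) μ := by
  rw [integrable_fun_norm_addHaar μ (f := fun t => exp (-(c * t)))]
  refine (integrableOn_rpow_mul_exp_neg_mul_rpow (s := (finrank ℝ E - 1 : ℕ)) (p := 1)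
    (neg_one_lt_zero.trans_le (Nat.cast_nonneg _)) one_pos hc).congr_fun (fun y _ => ?_)
    measurableSet_Ioi
  simp [Real.rpow_natCast]

end HaarMeasure

section ExpAsymptotics

theorem rpow_neg_mul_exp_neg_le_of_half_le {α ε ρ r t : ℝ} (hα : 0 ≤ α) (hε : 0 ≤ ε)
    (hρ : 0 < ρ) (ht : 0 ≤ t) (hr : ρ / 2 ≤ r) (hrt : ρ - t ≤ r) :
    r ^ (-α) * exp (-r) ≤ 2 ^ α * exp ((1 + ε) * t) * (ρ ^ (-α) * exp (-ρ)) := by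
  calc r ^ (-α) * exp (-r) ≤ (ρ / 2) ^ (-α) * exp ((1 + ε) * t + -ρ) := by
        have := rpow_le_rpow_of_nonpos (by positivity) hr (neg_nonpos.mpr hα)
        gcongr
        nlinarith
    _ = 2 ^ α * exp ((1 + ε) * t) * (ρ ^ (-α) * exp (-ρ)) := by
        rw [div_rpow hρ.le zero_le_two, rpow_neg zero_le_two, exp_add]
        field_simp

theorem exp_neg_le_of_lt_half {α ε ρ r t : ℝ} (hε : 0 ≤ ε) (hρ : 0 < ρ) (hr : r < ρ / 2)
    (hrt : ρ - t ≤ r) (hpow : ρ ^ α ≤ exp (ε / 2 * ρ)) :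
    exp (-r) ≤ exp ((1 + ε) * t) * (ρ ^ (-α) * exp (-ρ)) := by
  have key : exp (-r) * ρ ^ α ≤ exp ((1 + ε) * t) * exp (-ρ) := by
    calc exp (-r) * ρ ^ α ≤ exp (-r) * exp (ε / 2 * ρ) := by gcongr
      _ ≤ exp ((1 + ε) * t) * exp (-ρ) := by
          rw [← exp_add, ← exp_add]
          exact exp_le_exp.mpr (by nlinarith)
  calc exp (-r) = exp (-r) * ρ ^ α * (ρ ^ α)⁻¹ := by
        rw [mul_inv_cancel_right₀ (rpow_pos_of_pos hρ α).ne']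
    _ ≤ exp ((1 + ε) * t) * exp (-ρ) * (ρ ^ α)⁻¹ :=
        mul_le_mul_of_nonneg_right key (by positivity)
    _ = exp ((1 + ε) * t) * (ρ ^ (-α) * exp (-ρ)) := by
        rw [rpow_neg hρ.le]
        ring

variable {g : ℝ → ℝ} {α L : ℝ}

theorem abs_eq_abs_rpow_mul_exp_mul_mul {s : ℝ} (hs : 0 < s) :
    |g s| = |s ^ α * exp s * g s| * (s ^ (-α) * exp (-s)) := by
  rw [abs_mul, abs_of_pos (by positivity : 0 < s ^ α * exp s), rpow_neg hs.le, exp_neg]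
  field_simp

theorem eventually_abs_le_of_tendsto_rpow_mul_exp_mul
    (hg : Tendsto (fun s => s ^ α * exp s * g s) atTop (𝓝 L)) :
    ∀ᶠ s in atTop, |g s| ≤ (|L| + 1) * (s ^ (-α) * exp (-s)) := by
  filter_upwards [hg.abs.eventually_le_const (lt_add_one |L|), eventually_gt_atTop 0]
    with s hs hs0
  rw [abs_eq_abs_rpow_mul_exp_mul_mul hs0]
  gcongr

theorem eventually_le_abs_of_tendsto_rpow_mul_exp_mul
    (hg : Tendsto (fun s => s ^ α * exp s * g s) atTop (𝓝 L)) (hL : L ≠ 0) :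
    ∀ᶠ s in atTop, |L| / 2 * (s ^ (-α) * exp (-s)) ≤ |g s| := by
  filter_upwards [hg.abs.eventually_const_le (half_lt_self (abs_pos.mpr hL)),
    eventually_gt_atTop 0] with s hs hs0
  rw [abs_eq_abs_rpow_mul_exp_mul_mul hs0]
  gcongr

theorem exists_abs_le_mul_exp_neg_of_tendsto_rpow_mul_exp_mul
    (hg : Tendsto (fun s => s ^ α * exp s * g s) atTop (𝓝 L)) (hα : 0 ≤ α)
    {S : Set ℝ} (hbdd : ∀ R, ∃ C, ∀ s ∈ S, s ≤ R → |g s| ≤ C) :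
    ∃ K, ∀ s ∈ S, |g s| ≤ K * exp (-s) := by
  obtain ⟨R, hR⟩ := eventually_atTop.mp ((eventually_abs_le_of_tendsto_rpow_mul_exp_mul
    hg).and (eventually_ge_atTop 1))
  obtain ⟨C, hC⟩ := hbdd R
  refine ⟨max (|L| + 1) (C * exp R), fun s hs => ?_⟩
  rcases le_or_gt R s with hRs | hsR
  · obtain ⟨hgs, hs1⟩ := hR s hRs
    calc |g s| ≤ (|L| + 1) * (s ^ (-α) * exp (-s)) := hgs
      _ ≤ (|L| + 1) * (1 * exp (-s)) := by
        gcongr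
        exact rpow_le_one_of_one_le_of_nonpos hs1 (neg_nonpos.mpr hα)
      _ ≤ _ := by rw [one_mul]; gcongr; exact le_max_left _ _
  · have hCs := hC s hs hsR.le
    calc |g s| ≤ C * (exp R * exp (-s)) := by
          rw [← exp_add]
          nlinarith [one_le_exp (by linarith : 0 ≤ R + -s), abs_nonneg (g s)]
      _ ≤ _ := by rw [← mul_assoc]; gcongr; exact le_max_right _ _

theorem tendsto_comp_div_of_tendsto_rpow_mul_exp_mul
    (hg : Tendsto (fun s => s ^ α * exp s * g s) atTop (𝓝 L)) (hL : L ≠ 0)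
    {r : ℝ → ℝ} {a : ℝ} (hr : Tendsto (fun ρ => r ρ - ρ) atTop (𝓝 a)) :
    Tendsto (fun ρ => g (r ρ) / g ρ) atTop (𝓝 (exp (-a))) := by
  have hr_top : Tendsto r atTop atTop :=
    (hr.add_atTop tendsto_id).congr fun ρ => sub_add_cancel _ _
  have hratio : Tendsto (fun ρ => ρ / r ρ) atTop (𝓝 1) := by
    have h := ((hr.div_atTop tendsto_id).const_add 1).inv₀ (by norm_num)
    rw [add_zero, inv_one] at h
    refine h.congr' ?_
    filter_upwards [eventually_ne_atTop 0] with ρ hρ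
    rw [id, one_add_div hρ, add_sub_cancel, inv_div]
  have hlim := (((hg.comp hr_top).div hg hL).mul
    ((continuousAt_rpow_const 1 α (Or.inl one_ne_zero)).tendsto.comp hratio)).mul
    ((continuous_exp.tendsto _).comp hr.neg)
  rw [div_self hL, one_rpow, one_mul, one_mul] at hlim
  refine hlim.congr' ?_
  filter_upwards [eventually_gt_atTop 0, hr_top.eventually_gt_atTop 0] with ρ hρ hrρ
  simp only [Function.comp_apply, Pi.div_apply, neg_sub]
  rw [div_rpow hρ.le hrρ.le, exp_sub]
  rcases eq_or_ne (g ρ) 0 with h0 | h0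
  · simp [h0]
  · field_simp

theorem exists_eventually_abs_le_mul_exp_mul_rpow_neg_mul_exp_neg
    (hg : Tendsto (fun s => s ^ α * exp s * g s) atTop (𝓝 L)) (hα : 0 ≤ α)
    {C : ℝ} (hC : ∀ r ∈ Ioi (0 : ℝ), |g r| ≤ C) {ε : ℝ} (hε : 0 < ε) :
    ∃ M ≥ 0, ∀ᶠ ρ in atTop, ∀ r > 0, ∀ t ≥ 0, ρ - t ≤ r →
      |g r| ≤ M * exp ((1 + ε) * t) * (ρ ^ (-α) * exp (-ρ)) := by
  obtain ⟨K, hK⟩ := exists_abs_le_mul_exp_neg_of_tendsto_rpow_mul_exp_mul hg hα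
    (S := Ioi 0) fun _ => ⟨C, fun s hs _ => hC s hs⟩
  have hK0 : 0 ≤ K :=
    nonneg_of_mul_nonneg_left ((abs_nonneg _).trans (hK 1 (mem_Ioi.mpr one_pos))) (exp_pos _)
  obtain ⟨R, hR⟩ := eventually_atTop.mp (eventually_abs_le_of_tendsto_rpow_mul_exp_mul hg)
  have hpow : ∀ᶠ ρ in atTop, ρ ^ α ≤ exp (ε / 2 * ρ) := by
    filter_upwards [(isLittleO_rpow_exp_pos_mul_atTop α (half_pos hε)).bound one_pos] with ρ h
    rw [one_mul, norm_of_nonneg (exp_pos _).le] at h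
    exact (le_abs_self _).trans h
  refine ⟨max ((|L| + 1) * 2 ^ α) K, le_max_of_le_right hK0, ?_⟩
  filter_upwards [hpow, eventually_ge_atTop (2 * R), eventually_gt_atTop 0]
    with ρ hρα hρR hρ r hr t ht hrt
  rcases le_or_gt (ρ / 2) r with hcase | hcase
  · calc |g r| ≤ (|L| + 1) * (r ^ (-α) * exp (-r)) := hR r (by linarith)
      _ ≤ (|L| + 1) * (2 ^ α * exp ((1 + ε) * t) * (ρ ^ (-α) * exp (-ρ))) := by
          gcongr (|L| + 1) * ?_
          exact rpow_neg_mul_exp_neg_le_of_half_le hα hε.le hρ ht hcase hrt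
      _ = (|L| + 1) * 2 ^ α * exp ((1 + ε) * t) * (ρ ^ (-α) * exp (-ρ)) := by ring
      _ ≤ _ := by
          gcongr ?_ * _ * _
          exact le_max_left _ _
  · calc |g r| ≤ K * exp (-r) := hK r hr
      _ ≤ K * (exp ((1 + ε) * t) * (ρ ^ (-α) * exp (-ρ))) := by
          gcongr K * ?_
          exact exp_neg_le_of_lt_half hε.le hρ hcase hrt hρα
      _ ≤ _ := by
          rw [← mul_assoc]
          gcongr ?_ * _ * _
          exact le_max_right _ _

theorem exists_eventually_abs_le_mul_exp_mul_abs
    (hg : Tendsto (fun s => s ^ α * exp s * g s) atTop (𝓝 L)) (hL : L ≠ 0) (hα : 0 ≤ α)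
    {C : ℝ} (hC : ∀ r ∈ Ioi (0 : ℝ), |g r| ≤ C) {ε : ℝ} (hε : 0 < ε) :
    ∃ M ≥ 0, ∀ᶠ ρ in atTop, ∀ r > 0, ∀ t ≥ 0, ρ - t ≤ r →
      |g r| ≤ M * exp ((1 + ε) * t) * |g ρ| := by
  have hL' : 0 < |L| := abs_pos.mpr hL
  obtain ⟨M, hM0, hM⟩ := exists_eventually_abs_le_mul_exp_mul_rpow_neg_mul_exp_neg hg hα hC hε
  refine ⟨M * (2 / |L|), by positivity, ?_⟩
  filter_upwards [hM, eventually_le_abs_of_tendsto_rpow_mul_exp_mul hg hL]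
    with ρ hρ hlow r hr t ht hrt
  calc |g r| ≤ M * exp ((1 + ε) * t) * (ρ ^ (-α) * exp (-ρ)) := hρ r hr t ht hrt
    _ ≤ M * exp ((1 + ε) * t) * (2 / |L| * |g ρ|) := by
        gcongr M * _ * ?_
        rw [div_mul_eq_mul_div, le_div_iff₀ hL']
        linarith
    _ = M * (2 / |L|) * exp ((1 + ε) * t) * |g ρ| := by ring

end ExpAsymptotics

section Integrals

variable {E : Type*} [NormedAddCommGroup E] [InnerProductSpace ℝ E] [MeasurableSpace E]
  [BorelSpace E] {μ : Measure E}

theorem aestronglyMeasurable_mul_comp_norm_add_smul_mul_div {F : E → ℝ}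
    (hF : AEStronglyMeasurable F μ) {g : ℝ → ℝ} (hg : Measurable g) (e : E) (ρ : ℝ) :
    AEStronglyMeasurable (fun x => F x * g ‖x + ρ • e‖ * ((⟪x, e⟫ + ρ) / ‖x + ρ • e‖)) μ := by
  have hgr : Measurable fun x : E => g ‖x + ρ • e‖ := hg.comp (by fun_prop)
  exact (hF.mul hgr.aestronglyMeasurable).mul
    (by fun_prop : Measurable fun x : E => (⟪x, e⟫ + ρ) / ‖x + ρ • e‖).aestronglyMeasurable

variable [FiniteDimensional ℝ E] [μ.IsAddHaarMeasure]

theorem hasDerivAt_integral_mul_comp_norm_add_smul (hE : 1 < finrank ℝ E) {e : E}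
    (he : ‖e‖ = 1) {F : E → ℝ} (hF : Integrable F μ) {V : ℝ → ℝ}
    (hV_cont : ContinuousOn V (Ici 0)) (hV_diff : DifferentiableOn ℝ V (Ioi 0)) {K C : ℝ}
    (hVK : ∀ s ∈ Ici (0 : ℝ), |V s| ≤ K) (hV'C : ∀ s ∈ Ioi (0 : ℝ), |deriv V s| ≤ C) (ρ : ℝ) :
    HasDerivAt (fun τ => ∫ x, F x * V ‖x + τ • e‖ ∂μ)
      (∫ x, F x * deriv V ‖x + ρ • e‖ * ((⟪x, e⟫ + ρ) / ‖x + ρ • e‖) ∂μ) ρ := by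
  have hV_comp : ∀ τ : ℝ, Continuous fun x : E => V ‖x + τ • e‖ := fun τ =>
    hV_cont.comp_continuous (by fun_prop) fun _ => norm_nonneg _
  refine (hasDerivAt_integral_of_dominated_loc_of_deriv_le (bound := fun x => ‖F x‖ * C)
    (F := fun τ x => F x * V ‖x + τ • e‖)
    (F' := fun τ x => F x * deriv V ‖x + τ • e‖ * ((⟪x, e⟫ + τ) / ‖x + τ • e‖))
    univ_mem (Eventually.of_forall fun τ =>
      hF.aestronglyMeasurable.mul (hV_comp τ).aestronglyMeasurable)
    (hF.mul_bdd (hV_comp ρ).aestronglyMeasurable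
      (ae_of_all _ fun x => hVK _ (norm_nonneg _)))
    (aestronglyMeasurable_mul_comp_norm_add_smul_mul_div hF.aestronglyMeasurable
      (measurable_deriv V) e ρ)
    ?_ (hF.norm.mul_const C) ?_).2
  · filter_upwards [ae_forall_add_smul_ne_zero μ hE e] with x hx τ _
    rw [norm_mul, norm_mul, mul_assoc]
    gcongr
    exact mul_le_of_le_one_right (norm_nonneg _) (abs_div_norm_add_smul_le_one he τ) |>.trans
      (hV'C _ (norm_pos_iff.mpr (hx τ)))
  · filter_upwards [ae_forall_add_smul_ne_zero μ hE e] with x hx τ _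
    have hr : 0 < ‖x + τ • e‖ := norm_pos_iff.mpr (hx τ)
    have hV := (hV_diff.differentiableAt (Ioi_mem_nhds hr)).hasDerivAt.comp τ
      (hasDerivAt_norm_add_smul (hx τ))
    rw [inner_add_smul_of_norm_eq_one he] at hV
    rw [mul_assoc]
    exact hV.const_mul (F x)

theorem tendsto_integral_mul_comp_norm_add_smul_div [Nontrivial E] {e : E} (he : ‖e‖ = 1)
    {F : E → ℝ} (hF_meas : AEStronglyMeasurable F μ) {C₁ σ : ℝ} (hσ : 0 < σ)
    (hF : ∀ x, |F x| ≤ C₁ * exp (-((1 + σ) * ‖x‖))) {g : ℝ → ℝ} (hg_meas : Measurable g)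
    {α L C : ℝ} (hα : 0 ≤ α) (hg : Tendsto (fun s => s ^ α * exp s * g s) atTop (𝓝 L))
    (hL : L ≠ 0) (hC : ∀ r ∈ Ioi (0 : ℝ), |g r| ≤ C) :
    Tendsto (fun ρ : ℝ =>
        (∫ x, F x * g ‖x + ρ • e‖ * ((⟪x, e⟫ + ρ) / ‖x + ρ • e‖) ∂μ) / g ρ)
      atTop (𝓝 (∫ x, F x * exp (-⟪x, e⟫) ∂μ)) := by
  obtain ⟨M, hM0, hM⟩ :=
    exists_eventually_abs_le_mul_exp_mul_abs hg hL hα hC (half_pos hσ)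
  have hC₁ : 0 ≤ C₁ := nonneg_of_mul_nonneg_left ((abs_nonneg _).trans (hF 0)) (exp_pos _)
  simp_rw [← integral_div]
  refine tendsto_integral_filter_of_dominated_convergence
    (fun x => C₁ * M * exp (-(σ / 2 * ‖x‖)))
    (Eventually.of_forall fun ρ => by simpa only [div_eq_mul_inv] using
      (aestronglyMeasurable_mul_comp_norm_add_smul_mul_div hF_meas hg_meas e ρ).mul_const _)
    ?_ ((integrable_exp_neg_mul_norm μ (half_pos hσ)).const_mul _) (ae_of_all _ fun x => ?_)
  · filter_upwards [hM] with ρ hρ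
    exact ae_of_all _ fun x => abs_mul_comp_norm_add_smul_mul_div_le he x (hF x) hC₁ hM0 hρ
  · have h := ((tendsto_const_nhds (x := F x)).mul
      (tendsto_comp_div_of_tendsto_rpow_mul_exp_mul hg hL
        (tendsto_norm_add_smul_sub he x))).mul (tendsto_inner_add_div_norm_add_smul he x)
    rw [mul_one] at h
    refine h.congr fun ρ => ?_
    ring

end Integrals

section Profile

variable {W : ℝ → ℝ} {K : ℝ}

theorem exists_abs_le_of_continuousOn_Ici (hW : ContinuousOn W (Ici 0)) (R : ℝ) :
    ∃ B, ∀ s ∈ Ici (0 : ℝ), s ≤ R → |W s| ≤ B := by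
  obtain ⟨B, hB⟩ := isCompact_Icc.exists_bound_of_continuousOn
    (hW.mono (Icc_subset_Ici_self : Icc (0 : ℝ) R ⊆ Ici 0))
  exact ⟨B, fun s hs hsR => hB s ⟨hs, hsR⟩⟩

theorem abs_le_of_abs_le_mul_exp_neg (hWK : ∀ s ∈ Ici (0 : ℝ), |W s| ≤ K * exp (-s))
    {s : ℝ} (hs : s ∈ Ici (0 : ℝ)) : |W s| ≤ K := by
  have hK : 0 ≤ K :=
    nonneg_of_mul_nonneg_left ((abs_nonneg _).trans (hWK 0 (mem_Ici.mpr le_rfl))) (exp_pos _)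
  exact (hWK s hs).trans (mul_le_of_le_one_right hK (exp_le_one_iff.mpr (neg_nonpos.mpr hs)))

theorem abs_comp_le_mul_exp_neg_mul {f : ℝ → ℝ} {C₀ p : ℝ}
    (hW_nonneg : ∀ s ∈ Ici (0 : ℝ), 0 ≤ W s) (hWK : ∀ s ∈ Ici (0 : ℝ), |W s| ≤ K * exp (-s))
    (hC₀ : 0 ≤ C₀) (hp : 0 ≤ p)
    (hf : ∀ t : ℝ, |t| ≤ sSup (W '' Ici 0) → |f t| ≤ C₀ * |t| ^ p) {s : ℝ} (hs : 0 ≤ s) :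
    |f (W s)| ≤ C₀ * K ^ p * exp (-(p * s)) := by
  have hK : 0 ≤ K := (abs_nonneg _).trans (abs_le_of_abs_le_mul_exp_neg hWK hs)
  have hbdd : BddAbove (W '' Ici 0) := by
    refine ⟨K, ?_⟩
    rintro _ ⟨u, hu, rfl⟩
    exact (le_abs_self _).trans (abs_le_of_abs_le_mul_exp_neg hWK hu)
  have hsup : |W s| ≤ sSup (W '' Ici 0) := by
    rw [abs_of_nonneg (hW_nonneg s hs)]
    exact le_csSup hbdd (mem_image_of_mem W hs)
  calc |f (W s)| ≤ C₀ * |W s| ^ p := hf _ hsup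
    _ ≤ C₀ * (K * exp (-s)) ^ p := by gcongr; exact hWK s hs
    _ = C₀ * K ^ p * exp (-(p * s)) := by
        rw [mul_rpow hK (exp_pos _).le, ← exp_mul]
        ring_nf

end Profile

theorem interaction_integral_derivative_limit
    (N : ℕ) (hN : 2 ≤ N)
    (W : ℝ → ℝ) (hW_cont : ContinuousOn W (Ici 0))
    (hW_pos : ∀ r ∈ Ici (0 : ℝ), 0 < W r)
    (hW_C1 : ContDiffOn ℝ 1 W (Ioi 0))
    (hW'_bdd : ∃ C, ∀ r ∈ Ioi (0 : ℝ), |deriv W r| ≤ C)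
    (A : ℝ) (hA : 0 < A)
    (hW_asym : Tendsto (fun r => r ^ (((N : ℝ) - 1) / 2) * Real.exp r * W r)
      atTop (nhds A))
    (hW'_asym : Tendsto (fun r => r ^ (((N : ℝ) - 1) / 2) * Real.exp r * deriv W r)
      atTop (nhds (-A)))
    (w : EuclideanSpace ℝ (Fin N) → ℝ) (hw : ∀ x, w x = W ‖x‖)
    (f : ℝ → ℝ) (hf_cont : Continuous f)
    (C₀ σ : ℝ) (hC₀ : 0 < C₀) (hσ : 0 < σ)
    (hf_bound : ∀ t : ℝ, |t| ≤ sSup (W '' Ici 0) → |f t| ≤ C₀ * |t| ^ (1 + σ)) :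
    (∀ ρ : ℝ, 0 < ρ →
      HasDerivAt (fun τ : ℝ =>
          ∫ x : EuclideanSpace ℝ (Fin N),
            f (w x) * w (x + τ • EuclideanSpace.single (⟨0, by omega⟩ : Fin N) 1))
        (∫ x : EuclideanSpace ℝ (Fin N),
          f (w x) * deriv W ‖x + ρ • EuclideanSpace.single (⟨0, by omega⟩ : Fin N) 1‖ *
            ((x ⟨0, by omega⟩ + ρ) /
              ‖x + ρ • EuclideanSpace.single (⟨0, by omega⟩ : Fin N) 1‖)) ρ) ∧
    Tendsto (fun ρ : ℝ =>
        (∫ x : EuclideanSpace ℝ (Fin N),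
          f (w x) * deriv W ‖x + ρ • EuclideanSpace.single (⟨0, by omega⟩ : Fin N) 1‖ *
            ((x ⟨0, by omega⟩ + ρ) /
              ‖x + ρ • EuclideanSpace.single (⟨0, by omega⟩ : Fin N) 1‖)) / deriv W ρ)
      atTop
      (nhds (∫ x : EuclideanSpace ℝ (Fin N),
        f (w x) * Real.exp (-(x ⟨0, by omega⟩)))) := by
  set e := EuclideanSpace.single (⟨0, by omega⟩ : Fin N) (1 : ℝ)
  have he : ‖e‖ = 1 := by simp [e]
  have hcoord : ∀ x : EuclideanSpace ℝ (Fin N), x ⟨0, by omega⟩ = ⟪x, e⟫ := fun x => by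
    simp [e, EuclideanSpace.inner_single_right]
  have hE : 1 < finrank ℝ (EuclideanSpace ℝ (Fin N)) := by
    rw [finrank_euclideanSpace_fin]
    omega
  have : Nontrivial (EuclideanSpace ℝ (Fin N)) :=
    Module.nontrivial_of_finrank_pos (zero_lt_one.trans hE)
  have hα : 0 ≤ ((N : ℝ) - 1) / 2 := by
    have : (2 : ℝ) ≤ N := by exact_mod_cast hN
    linarith
  obtain ⟨C, hC⟩ := hW'_bdd
  obtain ⟨K, hK⟩ := exists_abs_le_mul_exp_neg_of_tendsto_rpow_mul_exp_mul hW_asym hα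
    (exists_abs_le_of_continuousOn_Ici hW_cont)
  have hF_cont : Continuous fun x : EuclideanSpace ℝ (Fin N) => f (W ‖x‖) :=
    hf_cont.comp (hW_cont.comp_continuous continuous_norm fun x => norm_nonneg x)
  have hF (x : EuclideanSpace ℝ (Fin N)) :
      |f (W ‖x‖)| ≤ C₀ * K ^ (1 + σ) * exp (-((1 + σ) * ‖x‖)) :=
    abs_comp_le_mul_exp_neg_mul (fun s hs => (hW_pos s hs).le) hK hC₀.le (by linarith)
      hf_bound (norm_nonneg x)
  have hF_int : Integrable fun x : EuclideanSpace ℝ (Fin N) => f (W ‖x‖) :=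
    ((integrable_exp_neg_mul_norm volume (by linarith : 0 < 1 + σ)).const_mul _).mono'
      hF_cont.aestronglyMeasurable (ae_of_all _ hF)
  simp only [hw, hcoord]
  exact ⟨fun ρ _ => hasDerivAt_integral_mul_comp_norm_add_smul hE he hF_int hW_cont
      (hW_C1.differentiableOn one_ne_zero) (fun _ => abs_le_of_abs_le_mul_exp_neg hK)
      hC ρ,
    tendsto_integral_mul_comp_norm_add_smul_div he hF_cont.aestronglyMeasurable hσ hF
      (measurable_deriv W) hα hW'_asym (neg_ne_zero.mpr hA.ne') hC⟩
end
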